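/- arXiv:1705.09429 — 9 statements merged into one kernel-verified Lean document; each statement's English description precedes it below -/
import Mathlib

section
/- Let F : F_q^n → F_q^N be any encoding function for an ICSIE instance (δ_s, 𝒢). Then F is a valid (δ_s,𝒢)-ICSIE encoding (i.e., decoding functions D_1,...,D_m satisfying the ICSIE condition exist) if and only if F(X) ≠ F(X') for all X, X' ∈ F_q^n with X − X' ∈ I(q,𝒢,δ_s). -/
open Finset

/-- Restriction of a vector to the coordinates in a finite index set. -/
def proj {ι 𝔽 : Type*} (A : Finset ι) (x : ι → 𝔽) : {a // a ∈ A} → 𝔽 :=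
  fun a => x a.1

/-- `enc` is a valid (δ,𝒢)-ICSIE encoding: decoders exist recovering the wanted
messages from the codeword and side information with at most `δ r` errors. -/
def ValidEnc (𝔽 : Type*) [DecidableEq 𝔽] {ι R C : Type*}
    (X f : R → Finset ι) (δ : R → ℕ) (enc : (ι → 𝔽) → C) : Prop :=
  ∃ D : (r : R) → C → ({a // a ∈ X r} → 𝔽) → ({a // a ∈ f r} → 𝔽),
    ∀ (r : R) (x : ι → 𝔽) (xt : {a // a ∈ X r} → 𝔽),
      hammingDist (proj (X r) x) xt ≤ δ r → D r (enc x) xt = proj (f r) x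

/-- The set I(q,𝒢,δ_s). -/
def ISet (𝔽 : Type*) [Zero 𝔽] [DecidableEq 𝔽] {ι R : Type*}
    (X f : R → Finset ι) (δ : R → ℕ) : Set (ι → 𝔽) :=
  {Z | ∃ r : R, hammingNorm (proj (X r) Z) ≤ 2 * δ r ∧ proj (f r) Z ≠ 0}

/-! A decoder for receiver `r` exists iff any two messages with the same codeword that lie
within `δ r` of a common side information agree on `f r`. Two vectors have a common point in
their Hamming balls of radius `δ r` iff they are at distance at most `2 δ r`: the witness agrees
with one of them on `δ r` of the coordinates where they differ and with the other elsewhere. -/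

section Hamming

variable {β γ : Type*} [Fintype β] [DecidableEq γ]

theorem exists_hammingDist_le_of_hammingDist_le_add {u v : β → γ} {a b : ℕ}
    (h : hammingDist u v ≤ a + b) : ∃ w, hammingDist u w ≤ a ∧ hammingDist v w ≤ b := by
  classical
  set S := univ.filter fun i => u i ≠ v i
  obtain ⟨T, hTS, hT⟩ := exists_subset_card_eq (min_le_right a #S)
  refine ⟨fun i => if i ∈ T then v i else u i, ?_, ?_⟩
  · have hsub : (univ.filter fun i => u i ≠ if i ∈ T then v i else u i) ⊆ T := by
      intro i hi
      by_contra hiT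
      simp [hiT] at hi
    calc _ ≤ #T := card_le_card hsub
      _ ≤ a := hT ▸ min_le_left _ _
  · have hsub : (univ.filter fun i => v i ≠ if i ∈ T then v i else u i) ⊆ S \ T := by
      intro i hi
      by_cases hiT : i ∈ T
      · simp [hiT] at hi
      · simp only [hiT, if_false, mem_filter, mem_univ, true_and] at hi
        simp [S, hiT, Ne.symm hi]
    have hS : #S = hammingDist u v := rfl
    calc _ ≤ #(S \ T) := card_le_card hsub
      _ = #S - #T := card_sdiff_of_subset hTS
      _ ≤ b := by omega

theorem exists_hammingDist_le_iff_hammingDist_le_add {u v : β → γ} {a b : ℕ} :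
    (∃ w, hammingDist u w ≤ a ∧ hammingDist v w ≤ b) ↔ hammingDist u v ≤ a + b := by
  refine ⟨fun ⟨w, hu, hv⟩ => ?_, exists_hammingDist_le_of_hammingDist_le_add⟩
  calc hammingDist u v ≤ hammingDist u w + hammingDist w v := hammingDist_triangle _ _ _
    _ ≤ a + b := add_le_add hu (hammingDist_comm v w ▸ hv)

end Hamming

section Decoding

variable {𝔽 ι R C : Type*} [DecidableEq 𝔽] (X f : R → Finset ι) (δ : R → ℕ)
  (enc : (ι → 𝔽) → C)

/-- The decoder outputs the wanted part of any message consistent with the codeword and the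
side information. -/
theorem validEnc_iff_forall_eq_of_hammingDist_le [Nonempty 𝔽] :
    ValidEnc 𝔽 X f δ enc ↔
      ∀ r x y xt, hammingDist (proj (X r) x) xt ≤ δ r → hammingDist (proj (X r) y) xt ≤ δ r →
        enc x = enc y → proj (f r) x = proj (f r) y := by
  constructor
  · rintro ⟨D, hD⟩ r x y xt hx hy hxy
    rw [← hD r x xt hx, ← hD r y xt hy, hxy]
  · intro h
    refine ⟨fun r c xt =>
      proj (f r) (Classical.epsilon fun y => enc y = c ∧ hammingDist (proj (X r) y) xt ≤ δ r),
      fun r x xt hx => ?_⟩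
    obtain ⟨hc, hy⟩ := Classical.epsilon_spec (p := fun y =>
      enc y = enc x ∧ hammingDist (proj (X r) y) xt ≤ δ r) ⟨x, rfl, hx⟩
    exact h r _ x xt hy hx hc

theorem validEnc_iff_forall_eq_of_hammingDist_le_two_mul [Nonempty 𝔽] :
    ValidEnc 𝔽 X f δ enc ↔
      ∀ r x y, hammingDist (proj (X r) x) (proj (X r) y) ≤ 2 * δ r →
        enc x = enc y → proj (f r) x = proj (f r) y := by
  simp only [validEnc_iff_forall_eq_of_hammingDist_le, two_mul,
    ← exists_hammingDist_le_iff_hammingDist_le_add, forall_exists_index, and_imp]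

end Decoding

theorem hammingNorm_proj_sub {𝔽 ι : Type*} [AddGroup 𝔽] [DecidableEq 𝔽] (A : Finset ι)
    (x y : ι → 𝔽) : hammingNorm (proj A (x - y)) = hammingDist (proj A x) (proj A y) := by
  unfold hammingNorm hammingDist
  congr 1
  exact filter_congr fun i _ => sub_ne_zero

theorem sub_mem_ISet_iff {𝔽 ι R : Type*} [AddGroup 𝔽] [DecidableEq 𝔽]
    (X f : R → Finset ι) (δ : R → ℕ) (x y : ι → 𝔽) :
    x - y ∈ ISet 𝔽 X f δ ↔
      ∃ r, hammingDist (proj (X r) x) (proj (X r) y) ≤ 2 * δ r ∧ proj (f r) x ≠ proj (f r) y :=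
  exists_congr fun r => and_congr
    (by rw [hammingNorm_proj_sub]) (not_congr sub_eq_zero)

theorem validEnc_iff_separates_ISet_general
    {𝔽 : Type*} [Field 𝔽] [DecidableEq 𝔽]
    {n m N : ℕ} (X f : Fin m → Finset (Fin n)) (δ : Fin m → ℕ)
    (F : (Fin n → 𝔽) → (Fin N → 𝔽)) :
    ValidEnc 𝔽 X f δ F ↔
      ∀ x x' : Fin n → 𝔽, x - x' ∈ ISet 𝔽 X f δ → F x ≠ F x' := by
  simp only [validEnc_iff_forall_eq_of_hammingDist_le_two_mul, sub_mem_ISet_iff]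
  exact ⟨fun h x y ⟨r, hd, hne⟩ hF => hne (h r x y hd hF),
    fun h r x y hd hF => by_contra fun hne => h x y ⟨r, hd, hne⟩ hF⟩

/-- an encoding `F` is a valid (δ_s,𝒢)-ICSIE encoding iff
`F X ≠ F X'` whenever `X - X' ∈ I(q,𝒢,δ_s)`. -/
theorem validEnc_iff_separates_ISet
    {𝔽 : Type*} [Field 𝔽] [Fintype 𝔽] [DecidableEq 𝔽]
    {n m N : ℕ} (X f : Fin m → Finset (Fin n)) (δ : Fin m → ℕ)
    (hdisj : ∀ i, Disjoint (f i) (X i))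
    (F : (Fin n → 𝔽) → (Fin N → 𝔽)) :
    ValidEnc 𝔽 X f δ F ↔
      ∀ x x' : Fin n → 𝔽, x - x' ∈ ISet 𝔽 X f δ → F x ≠ F x' :=
  validEnc_iff_separates_ISet_general X f δ F
end

section
/- If 𝒢 is δ_s-acyclic, then I(q,𝒢,δ_s) = F_q^n \ {0}, i.e., every nonzero vector of F_q^n belongs to I(q,𝒢,δ_s). -/
open Finset

/-- The family Φ: subsets `B` such that every receiver wanting a message of `B`
has at least `2δ+1` side information symbols inside `B`. -/
def Phi {ι R : Type*} [DecidableEq ι] (X f : R → Finset ι) (δ : R → ℕ) :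
    Set (Finset ι) :=
  {B | ∀ r : R, (f r ∩ B).Nonempty → 2 * δ r + 1 ≤ (X r ∩ B).card}

/-- 𝒢 is δ_s-acyclic: no nonempty subset of the message index set is a δ_s-cycle. -/
def DeltaAcyclic {ι R : Type*} [DecidableEq ι] (X f : R → Finset ι) (δ : R → ℕ) : Prop :=
  ∀ B : Finset ι, B.Nonempty → B ∉ Phi X f δ

/-- if 𝒢 is δ_s-acyclic then I(q,𝒢,δ_s) = F_q^n \ {0}. -/
theorem ISet_eq_nonzero_of_deltaAcyclic
    {𝔽 : Type*} [Field 𝔽] [Fintype 𝔽] [DecidableEq 𝔽]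
    {n m : ℕ} (X f : Fin m → Finset (Fin n)) (δ : Fin m → ℕ)
    (hdisj : ∀ i, Disjoint (f i) (X i))
    (hacyc : DeltaAcyclic X f δ) :
    ISet 𝔽 X f δ = {Z : Fin n → 𝔽 | Z ≠ 0} := by
  ext Z
  simp only [ISet, Set.mem_setOf_eq]
  constructor
  · rintro ⟨r, -, hne⟩ hZ0
    apply hne
    funext a
    simp [proj, hZ0]
  · intro hZ
    set B : Finset (Fin n) := Finset.univ.filter (fun i => Z i ≠ 0) with hB
    have hBne : B.Nonempty := by
      obtain ⟨i, hi⟩ := Function.ne_iff.mp hZ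
      exact ⟨i, by simp only [hB, Finset.mem_filter, Finset.mem_univ, true_and]; simpa using hi⟩
    have := hacyc B hBne
    simp only [Phi, Set.mem_setOf_eq, not_forall, not_le] at this
    obtain ⟨r, hfr, hXr⟩ := this
    refine ⟨r, ?_, ?_⟩
    · have hcard : hammingNorm (proj (X r) Z) = (X r ∩ B).card := by
        have h1 : X r ∩ B = (X r).filter (fun a => Z a ≠ 0) := by
          ext a; simp [hB, and_comm]
        rw [h1]
        unfold hammingNorm proj
        apply Finset.card_bij (fun a _ => a.1)
        · rintro ⟨a, ha⟩ hm
          simp only [Finset.mem_filter, Finset.mem_univ, true_and] at hm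
          exact Finset.mem_filter.mpr ⟨ha, hm⟩
        · rintro ⟨a, ha⟩ - ⟨b, hb⟩ - h
          simpa [Subtype.ext_iff] using h
        · intro a ha
          obtain ⟨haX, hane⟩ := Finset.mem_filter.mp ha
          exact ⟨⟨a, haX⟩, by simp [hane], rfl⟩
      omega
    · obtain ⟨a, ha⟩ := hfr
      rw [Finset.mem_inter] at ha
      intro h0
      have : proj (f r) Z ⟨a, ha.1⟩ = 0 := by rw [h0]; rfl
      have haB : Z a ≠ 0 := by
        have := ha.2; simp [hB] at this; exact this
      exact haB this
end

section
/- 𝒢 is δ_s-acyclic if and only if N_opt^q(δ_s,𝒢) = n. -/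
open Finset

/-- Optimal codelength of a (δ,𝒢)-ICSIE. -/
noncomputable def Nopt (𝔽 : Type*) [DecidableEq 𝔽] {ι R : Type*}
    (X f : R → Finset ι) (δ : R → ℕ) : ℕ :=
  sInf {N | ∃ enc : (ι → 𝔽) → (Fin N → 𝔽), ValidEnc 𝔽 X f δ enc}

/-!
An encoding is valid exactly when, for every receiver `r`, two message vectors with the same
codeword agree on `f r` as soon as their side information differs in at most `2δ r` places: a word
halfway between the two side informations cannot be decoded to both. In an acyclic graph the set of
coordinates where two distinct vectors differ has a receiver of this kind wanting one of them, so a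
valid encoding is injective and needs length `n`. Conversely, for a `δ`-cycle `B ∋ b` one sends
`x_j - x_b` for `j ∈ B \ {b}` and `x_j` off `B`, a word of length `n - 1`. Vectors with the same
codeword then differ by a constant on `B` and nowhere else, so either they coincide on the whole of
`B`, or every receiver wanting a coordinate of `B` sees them differ in more than `2δ` places.
-/

open Function

section Hamming

variable {ι β : Type*} [DecidableEq β]

theorem exists_hammingDist_le_and_le_iff [Fintype ι] {x y : ι → β} {a b : ℕ} :
    (∃ z, hammingDist x z ≤ a ∧ hammingDist y z ≤ b) ↔ hammingDist x y ≤ a + b := by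
  classical
  constructor
  · rintro ⟨z, hxz, hyz⟩
    calc hammingDist x y ≤ hammingDist x z + hammingDist z y := hammingDist_triangle x z y
      _ ≤ a + b := by rw [hammingDist_comm z y]; omega
  · intro hxy
    set D : Finset ι := {i | x i ≠ y i} with hD
    obtain ⟨T, hTD, hT⟩ := D.exists_subset_card_eq (min_le_right a #D)
    refine ⟨fun i => if i ∈ T then y i else x i, ?_, ?_⟩
    · calc hammingDist x _ ≤ #T := card_le_card fun i hi => by
            by_contra hiT
            simp [hiT] at hi
        _ ≤ a := hT ▸ min_le_left _ _
    · calc hammingDist y _ ≤ #(D \ T) := card_le_card fun i hi => by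
            by_cases hiT : i ∈ T
            · simp [hiT] at hi
            · simp only [mem_filter, mem_univ, true_and, if_neg hiT] at hi
              simp [hD, hiT, Ne.symm hi]
        _ = #D - #T := card_sdiff_of_subset hTD
        _ ≤ b := by
            have : #D = hammingDist x y := rfl
            omega

theorem hammingDist_proj [Fintype ι] [DecidableEq ι] (A : Finset ι) (x y : ι → β) :
    hammingDist (proj A x) (proj A y) = #(A ∩ ({i | x i ≠ y i} : Finset ι)) := by
  rw [hammingDist, ← card_map (Embedding.subtype _)]
  congr 1
  ext i
  simp only [proj, mem_map, Embedding.coe_subtype, mem_inter, mem_filter, mem_univ, true_and]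
  constructor
  · rintro ⟨a, ha, rfl⟩
    exact ⟨a.2, (mem_filter.1 ha).2⟩
  · rintro ⟨hi, hne⟩
    exact ⟨⟨i, hi⟩, mem_filter.2 ⟨mem_univ _, hne⟩, rfl⟩

end Hamming

section Encoding

variable {𝔽 ι R C : Type*} [DecidableEq 𝔽] {X f : R → Finset ι} {δ : R → ℕ}
  {enc : (ι → 𝔽) → C}

theorem ValidEnc.proj_eq_of_hammingDist_le (h : ValidEnc 𝔽 X f δ enc) {r : R} {x y : ι → 𝔽}
    (hxy : enc x = enc y) (hd : hammingDist (proj (X r) x) (proj (X r) y) ≤ 2 * δ r) :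
    proj (f r) x = proj (f r) y := by
  obtain ⟨D, hD⟩ := h
  obtain ⟨z, hxz, hyz⟩ := exists_hammingDist_le_and_le_iff.2 (hd.trans_eq (two_mul _))
  rw [← hD r x z hxz, ← hD r y z hyz, hxy]

theorem validEnc_of_forall_proj_eq [Nonempty 𝔽]
    (h : ∀ r x y, enc x = enc y → hammingDist (proj (X r) x) (proj (X r) y) ≤ 2 * δ r →
      proj (f r) x = proj (f r) y) :
    ValidEnc 𝔽 X f δ enc := by
  have hdecode : ∀ r c (z : {a // a ∈ X r} → 𝔽), ∃ v, ∀ x, enc x = c →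
      hammingDist (proj (X r) x) z ≤ δ r → proj (f r) x = v := by
    intro r c z
    by_cases hex : ∃ x₀, enc x₀ = c ∧ hammingDist (proj (X r) x₀) z ≤ δ r
    · obtain ⟨x₀, rfl, hx₀⟩ := hex
      refine ⟨proj (f r) x₀, fun x hx hxz => h r x x₀ hx ?_⟩
      exact (exists_hammingDist_le_and_le_iff.1 ⟨z, hxz, hx₀⟩).trans_eq (two_mul _).symm
    · exact ⟨Classical.arbitrary _, fun x hx hxz => (hex ⟨x, hx, hxz⟩).elim⟩
  choose D hD using hdecode
  exact ⟨D, fun r x z hxz => (hD r (enc x) z x rfl hxz).symm⟩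

theorem validEnc_id : ValidEnc 𝔽 X f δ (id : (ι → 𝔽) → ι → 𝔽) :=
  ⟨fun r c _ => proj (f r) c, fun _ _ _ _ => rfl⟩

theorem ValidEnc.equiv_comp {C' : Type*} (h : ValidEnc 𝔽 X f δ enc) (e : C ≃ C') :
    ValidEnc 𝔽 X f δ (e ∘ enc) := by
  obtain ⟨D, hD⟩ := h
  exact ⟨fun r c => D r (e.symm c), fun r x z hxz => by simpa using hD r x z hxz⟩

theorem nopt_le_card {κ : Type*} [Fintype κ] {enc : (ι → 𝔽) → κ → 𝔽}
    (h : ValidEnc 𝔽 X f δ enc) : Nopt 𝔽 X f δ ≤ Fintype.card κ :=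
  Nat.sInf_le ⟨_, h.equiv_comp ((Fintype.equivFin κ).arrowCongr (Equiv.refl 𝔽))⟩

variable (𝔽 X f δ) in
theorem nopt_le_card_self [Fintype ι] : Nopt 𝔽 X f δ ≤ Fintype.card ι :=
  nopt_le_card validEnc_id

theorem exists_validEnc_nopt [Fintype ι] :
    ∃ enc : (ι → 𝔽) → Fin (Nopt 𝔽 X f δ) → 𝔽, ValidEnc 𝔽 X f δ enc :=
  Nat.sInf_mem (s := {N | ∃ enc : (ι → 𝔽) → Fin N → 𝔽, ValidEnc 𝔽 X f δ enc})
    ⟨_, _, validEnc_id.equiv_comp ((Fintype.equivFin ι).arrowCongr (Equiv.refl 𝔽))⟩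

end Encoding

theorem card_le_card_of_injective_arrow {ι κ 𝔽 : Type*} [Fintype ι] [DecidableEq ι] [Fintype κ]
    [DecidableEq κ] [Fintype 𝔽] [Nontrivial 𝔽] {g : (ι → 𝔽) → κ → 𝔽} (hg : Injective g) :
    Fintype.card ι ≤ Fintype.card κ := by
  have hcard := Fintype.card_le_of_injective g hg
  rw [Fintype.card_fun, Fintype.card_fun] at hcard
  exact (Nat.pow_le_pow_iff_right Fintype.one_lt_card).1 hcard

section Acyclic

variable {𝔽 ι R C : Type*} [DecidableEq 𝔽] [Fintype ι] [DecidableEq ι] {X f : R → Finset ι}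
  {δ : R → ℕ}

theorem DeltaAcyclic.injective_of_validEnc {enc : (ι → 𝔽) → C} (hac : DeltaAcyclic X f δ)
    (h : ValidEnc 𝔽 X f δ enc) : Injective enc := by
  intro x y hxy
  by_contra hne
  set B : Finset ι := {i | x i ≠ y i} with hB
  obtain ⟨r, ⟨w, hw⟩, hXB⟩ : ∃ r, (f r ∩ B).Nonempty ∧ #(X r ∩ B) ≤ 2 * δ r := by
    obtain ⟨i, hi⟩ := Function.ne_iff.1 hne
    have hBne : B.Nonempty := ⟨i, by simpa [hB] using hi⟩
    simpa [Phi, Nat.lt_succ_iff] using hac B hBne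
  rw [mem_inter] at hw
  have hproj := h.proj_eq_of_hammingDist_le hxy (by rwa [hammingDist_proj])
  exact (mem_filter.1 hw.2).2 (congrFun hproj ⟨w, hw.1⟩)

theorem DeltaAcyclic.card_le_nopt [Fintype 𝔽] [Nontrivial 𝔽] (hac : DeltaAcyclic X f δ) :
    Fintype.card ι ≤ Nopt 𝔽 X f δ := by
  obtain ⟨enc, henc⟩ := exists_validEnc_nopt (𝔽 := 𝔽) (X := X) (f := f) (δ := δ)
  simpa using card_le_card_of_injective_arrow (hac.injective_of_validEnc henc)

end Acyclic

section Cycle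

variable {𝔽 ι : Type*} [AddCommGroup 𝔽] [DecidableEq ι]

def cycleEnc (B : Finset ι) (b : ι) (x : ι → 𝔽) : {j // j ≠ b} → 𝔽 :=
  fun j => x j - if j.1 ∈ B then x b else 0

theorem sub_eq_ite_of_cycleEnc_eq {B : Finset ι} {b : ι} (hb : b ∈ B) {x y : ι → 𝔽}
    (hxy : cycleEnc B b x = cycleEnc B b y) (j : ι) :
    x j - y j = if j ∈ B then x b - y b else 0 := by
  by_cases hjb : j = b
  · simp [hjb, hb]
  · have := congrFun hxy ⟨j, hjb⟩
    simp only [cycleEnc] at this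
    split_ifs at this ⊢
    · exact sub_eq_sub_iff_sub_eq_sub.1 this
    · simpa [sub_eq_zero] using this

variable [DecidableEq 𝔽] [Fintype ι] {R : Type*} {X f : R → Finset ι} {δ : R → ℕ}

theorem validEnc_cycleEnc {B : Finset ι} {b : ι} (hB : B ∈ Phi X f δ) (hb : b ∈ B) :
    ValidEnc 𝔽 X f δ (cycleEnc B b) := by
  refine validEnc_of_forall_proj_eq fun r x y hxy hd => ?_
  have hsub := sub_eq_ite_of_cycleEnc_eq hb hxy
  by_cases hxb : x b = y b
  · congr 1
    funext j
    simpa [hxb, sub_eq_zero] using hsub j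
  · have hdiff : ({i | x i ≠ y i} : Finset ι) = B := by
      ext i
      rw [mem_filter, ← sub_ne_zero, hsub i]
      by_cases hi : i ∈ B <;> simp [hi, sub_eq_zero, hxb]
    rw [hammingDist_proj, hdiff] at hd
    have hfB : ¬ (f r ∩ B).Nonempty := fun hne => by have := hB r hne; omega
    funext w
    have hwB : w.1 ∉ B := fun hwB => hfB ⟨w, mem_inter.2 ⟨w.2, hwB⟩⟩
    exact sub_eq_zero.1 ((hsub w).trans (if_neg hwB))

theorem nopt_lt_card_of_mem_phi {B : Finset ι} (hB : B ∈ Phi X f δ) (hBne : B.Nonempty) :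
    Nopt 𝔽 X f δ < Fintype.card ι := by
  obtain ⟨b, hb⟩ := hBne
  have hle := nopt_le_card (validEnc_cycleEnc (𝔽 := 𝔽) hB hb)
  rw [Fintype.card_subtype_compl, Fintype.card_subtype_eq] at hle
  have := Fintype.card_pos_iff.2 ⟨b⟩
  omega

end Cycle

theorem deltaAcyclic_iff_Nopt_eq_general
    {𝔽 : Type*} [Field 𝔽] [Fintype 𝔽] [DecidableEq 𝔽]
    {n m : ℕ} (X f : Fin m → Finset (Fin n)) (δ : Fin m → ℕ) :
    DeltaAcyclic X f δ ↔ Nopt 𝔽 X f δ = n := by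
  constructor
  · intro hac
    have hle := nopt_le_card_self 𝔽 X f δ
    have hge := hac.card_le_nopt (𝔽 := 𝔽)
    rw [Fintype.card_fin] at hle hge
    exact hle.antisymm hge
  · intro hn B hBne hB
    simpa [hn] using nopt_lt_card_of_mem_phi (𝔽 := 𝔽) hB hBne

/-- 𝒢 is δ_s-acyclic iff the optimal ICSIE codelength equals `n`. -/
theorem deltaAcyclic_iff_Nopt_eq
    {𝔽 : Type*} [Field 𝔽] [Fintype 𝔽] [DecidableEq 𝔽]
    {n m : ℕ} (X f : Fin m → Finset (Fin n)) (δ : Fin m → ℕ)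
    (hdisj : ∀ i, Disjoint (f i) (X i)) :
    DeltaAcyclic X f δ ↔ Nopt 𝔽 X f δ = n :=
  deltaAcyclic_iff_Nopt_eq_general X f δ
end

section
/- Under the S⊎E partition hypotheses, every Z ∈ F_q^{S⊎E} with Z_S = 0 and Z_E ≠ 0 belongs to I(q,𝒢,δ_s). -/
open Finset

/-- under the S⊎E partition hypotheses, every vector `Z` with
`Z_S = 0` and `Z_E ≠ 0` belongs to I(q,𝒢,δ_s). -/
theorem mem_ISet_of_ZS_eq_zero
    {𝔽 : Type*} [Field 𝔽] [Fintype 𝔽] [DecidableEq 𝔽]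
    {S E R : Type*} [Fintype S] [Fintype E] [Fintype R]
    [DecidableEq S] [DecidableEq E]
    (X f : R → Finset (S ⊕ E)) (δ : R → ℕ)
    (hdisj : ∀ r, Disjoint (f r) (X r))
    (recv : E → R) (hinj : Function.Injective recv)
    (hwant : ∀ e : E, f (recv e) = {Sum.inr e})
    (hother : ∀ r : R, (∀ e : E, recv e ≠ r) → ∀ x ∈ f r, x.isLeft)
    (hacyc : ∃ ord : E → ℕ, ∀ e e' : E, Sum.inr e' ∈ X (recv e) → ord e' < ord e)
    (Z : S ⊕ E → 𝔽) (hZS : ∀ s : S, Z (Sum.inl s) = 0)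
    (hZE : ∃ e : E, Z (Sum.inr e) ≠ 0) :
    Z ∈ ISet 𝔽 X f δ := by
  obtain ⟨ord, hord⟩ := hacyc
  obtain ⟨e0, he0⟩ := hZE
  classical
  have hne : (Finset.univ.filter (fun e : E => Z (Sum.inr e) ≠ 0)).Nonempty :=
    ⟨e0, by simp [he0]⟩
  obtain ⟨e, heT, hmin⟩ := Finset.exists_min_image _ ord hne
  simp only [Finset.mem_filter, Finset.mem_univ, true_and] at heT
  refine ⟨recv e, ?_, ?_⟩
  · have hzero : proj (X (recv e)) Z = 0 := by
      funext a
      obtain ⟨x, hx⟩ := a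
      cases x with
      | inl s => exact hZS s
      | inr e' =>
        by_contra hne'
        have he'T : e' ∈ Finset.univ.filter (fun e : E => Z (Sum.inr e) ≠ 0) := by
          simpa [proj] using hne'
        have := hmin e' he'T
        exact absurd (hord e e' hx) (not_lt.mpr this)
    rw [hzero]
    simp [hammingNorm]
  · intro h
    have hmem : Sum.inr e ∈ f (recv e) := by rw [hwant e]; exact Finset.mem_singleton_self _
    have := congrFun h ⟨Sum.inr e, hmem⟩
    exact heT this
end

section
/- Under the S⊎E partition hypotheses, every valid (δ_s,𝒢)-ICSIE encoding F : F_q^{S⊎E} → F_q^N has codelength N ≥ |E|; in particular N_opt^q(δ_s,𝒢) ≥ |E|. -/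
open Finset

/-- under the S⊎E partition hypotheses, every valid
(δ_s,𝒢)-ICSIE encoding has codelength at least `|E|`; in particular
`N_opt ≥ |E|`. -/
theorem card_le_codelength
    {𝔽 : Type*} [Field 𝔽] [Fintype 𝔽] [DecidableEq 𝔽]
    {S E R : Type*} [Fintype S] [Fintype E] [Fintype R]
    [DecidableEq S] [DecidableEq E]
    (X f : R → Finset (S ⊕ E)) (δ : R → ℕ)
    (hdisj : ∀ r, Disjoint (f r) (X r))
    (recv : E → R) (hinj : Function.Injective recv)
    (hwant : ∀ e : E, f (recv e) = {Sum.inr e})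
    (hother : ∀ r : R, (∀ e : E, recv e ≠ r) → ∀ x ∈ f r, x.isLeft)
    (hacyc : ∃ ord : E → ℕ, ∀ e e' : E, Sum.inr e' ∈ X (recv e) → ord e' < ord e) :
    (∀ (N : ℕ) (enc : (S ⊕ E → 𝔽) → (Fin N → 𝔽)),
        ValidEnc 𝔽 X f δ enc → Fintype.card E ≤ N)
      ∧ Fintype.card E ≤ Nopt 𝔽 X f δ := by
  obtain ⟨ord, hord⟩ := hacyc
  have main : ∀ (N : ℕ) (enc : (S ⊕ E → 𝔽) → (Fin N → 𝔽)),
      ValidEnc 𝔽 X f δ enc → Fintype.card E ≤ N := by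
    rintro N enc ⟨D, hD⟩
    set vec : (E → 𝔽) → (S ⊕ E → 𝔽) := fun z => Sum.elim 0 z with hvec
    have hginj : Function.Injective (fun z => enc (vec z)) := by
      intro z z' hzz
      simp only at hzz
      funext e
      have key : ∀ n, ∀ e : E, ord e < n → z e = z' e := by
        intro n
        induction n with
        | zero => intro e h; omega
        | succ n ih =>
          intro e he
          have hside : proj (X (recv e)) (vec z) = proj (X (recv e)) (vec z') := by
            funext a
            obtain ⟨a, ha⟩ := a
            cases a with
            | inl s => rfl
            | inr e' =>
              have h' := hord e e' ha
              have := ih e' (by omega)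
              simp [proj, vec, this]
          have h1 := hD (recv e) (vec z) (proj (X (recv e)) (vec z)) (by simp)
          have h2 := hD (recv e) (vec z') (proj (X (recv e)) (vec z')) (by simp)
          rw [← hside, ← hzz] at h2
          have heq := h1.symm.trans h2
          have hm : Sum.inr e ∈ f (recv e) := by rw [hwant]; simp
          have := congrFun heq ⟨Sum.inr e, hm⟩
          simpa [proj, vec] using this
      exact key (ord e + 1) e (Nat.lt_succ_self _)
    have hcard := Fintype.card_le_of_injective _ hginj
    simp only [Fintype.card_fun, Fintype.card_fin] at hcard
    have h1 : 1 < Fintype.card 𝔽 := Fintype.one_lt_card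
    exact (Nat.pow_le_pow_iff_right h1).mp hcard
  refine ⟨main, ?_⟩
  have hne : {N | ∃ enc : (S ⊕ E → 𝔽) → (Fin N → 𝔽), ValidEnc 𝔽 X f δ enc}.Nonempty := by
    refine ⟨Fintype.card (S ⊕ E), ?_⟩
    let eqv := Fintype.equivFin (S ⊕ E)
    refine ⟨fun x i => x (eqv.symm i), fun r c xt => proj (f r) (fun a => c (eqv a)), ?_⟩
    intro r x xt _
    funext a
    simp [proj]
  have hmem := Nat.sInf_mem hne
  obtain ⟨enc, henc⟩ := hmem
  exact main _ enc henc
end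

section
/- Under the S⊎E partition hypotheses, let 𝒢⁺ be the instance obtained from 𝒢 by adding one additional receiver t_all with side information set S, wanted set E, and error resistance capability 0. Then I(q,𝒢⁺,δ_s⁺) = I(q,𝒢,δ_s), and an encoding F : F_q^{S⊎E} → F_q^N is a valid (δ_s,𝒢)-ICSIE encoding if and only if it is a valid (δ_s⁺,𝒢⁺)-ICSIE encoding; i.e., the receiver t_all is redundant. -/
/-!
A decoding demand with zero error tolerance is met exactly when the codeword together with the
side information determines the wanted messages. For `t_all` this follows from the other
receivers by processing `E` in increasing `ord`: the receiver `R_e` needs only `S` and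
messages of smaller order, all already determined, so its decoder (fed its true side
information) determines `e`. The same minimal-order argument puts every `Z` with `Z_S = 0` and
`Z_E ≠ 0` into `I_{R_e}`, where `e` is a nonzero `E`-coordinate of `Z` of minimal order.
-/

open Finset

theorem proj_eq_proj_iff {ι 𝔽 : Type*} {A : Finset ι} {x x' : ι → 𝔽} :
    proj A x = proj A x' ↔ ∀ a ∈ A, x a = x' a :=
  ⟨fun h a ha => congrFun h ⟨a, ha⟩, fun h => funext fun a => h a a.2⟩

section

variable {𝔽 ι R R' C : Type*} [DecidableEq 𝔽]

theorem iSet_sumElim [Zero 𝔽] (X f : R → Finset ι) (δ : R → ℕ) (X' f' : R' → Finset ι)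
    (δ' : R' → ℕ) :
    ISet 𝔽 (Sum.elim X X') (Sum.elim f f') (Sum.elim δ δ') = ISet 𝔽 X f δ ∪ ISet 𝔽 X' f' δ' := by
  ext Z
  exact Sum.exists

theorem validEnc_sumElim_iff (X f : R → Finset ι) (δ : R → ℕ) (X' f' : R' → Finset ι)
    (δ' : R' → ℕ) (enc : (ι → 𝔽) → C) :
    ValidEnc 𝔽 (Sum.elim X X') (Sum.elim f f') (Sum.elim δ δ') enc ↔
      ValidEnc 𝔽 X f δ enc ∧ ValidEnc 𝔽 X' f' δ' enc := by
  constructor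
  · rintro ⟨D, hD⟩
    exact ⟨⟨fun r => D (.inl r), fun r => hD (.inl r)⟩, ⟨fun r => D (.inr r), fun r => hD (.inr r)⟩⟩
  · rintro ⟨⟨D, hD⟩, ⟨D', hD'⟩⟩
    refine ⟨fun r => match r with | .inl r => D r | .inr r => D' r, ?_⟩
    rintro (r | r)
    exacts [hD r, hD' r]

theorem ValidEnc.proj_eq_of_enc_eq {X f : R → Finset ι} {δ : R → ℕ} {enc : (ι → 𝔽) → C}
    (hv : ValidEnc 𝔽 X f δ enc) (r : R) {x x' : ι → 𝔽} (hc : enc x = enc x')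
    (hX : proj (X r) x = proj (X r) x') : proj (f r) x = proj (f r) x' := by
  obtain ⟨D, hD⟩ := hv
  rw [← hD r x (proj (X r) x) (by simp), ← hD r x' (proj (X r) x) (by simp [hX]), hc]

theorem validEnc_zero_of_proj_eq [Nonempty 𝔽] {X f : R → Finset ι} {enc : (ι → 𝔽) → C}
    (h : ∀ r x x', enc x = enc x' → proj (X r) x = proj (X r) x' →
      proj (f r) x = proj (f r) x') :
    ValidEnc 𝔽 X f (fun _ => 0) enc := by
  refine ⟨fun r c xt =>
    proj (f r) (Classical.epsilon fun x => enc x = c ∧ proj (X r) x = xt), ?_⟩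
  intro r x xt hd
  obtain rfl : proj (X r) x = xt := hammingDist_eq_zero.1 (Nat.le_zero.1 hd)
  obtain ⟨hc, hX⟩ := Classical.epsilon_spec (p := fun x' => enc x' = enc x ∧
    proj (X r) x' = proj (X r) x) ⟨x, rfl, rfl⟩
  exact h r _ _ hc hX

end

section

variable {𝔽 S E R C : Type*} [DecidableEq 𝔽] {X f : R → Finset (S ⊕ E)} {recv : E → R}
  {ord : E → ℕ}

theorem exists_minimal_failure {N : E → Finset (S ⊕ E)}
    (hord : ∀ e e', Sum.inr e' ∈ N e → ord e' < ord e) (P : S ⊕ E → Prop)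
    (hS : ∀ s, P (.inl s)) (hE : ∃ e, ¬P (.inr e)) :
    ∃ e, ¬P (.inr e) ∧ ∀ a ∈ N e, P a := by
  obtain ⟨e, he, hmin⟩ := (InvImage.wf ord wellFounded_lt).has_min {e | ¬P (.inr e)} hE
  refine ⟨e, he, ?_⟩
  rintro (s | e') ha
  · exact hS s
  · by_contra h
    exact hmin e' h (hord e e' ha)

variable (hmem : ∀ e, Sum.inr e ∈ f (recv e))
  (hord : ∀ e e', Sum.inr e' ∈ X (recv e) → ord e' < ord e)
include hmem hord

theorem mem_iSet_of_left_eq_zero [Zero 𝔽] (δ : R → ℕ) {Z : S ⊕ E → 𝔽}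
    (hS : ∀ s, Z (.inl s) = 0) (hE : ∃ e, Z (.inr e) ≠ 0) : Z ∈ ISet 𝔽 X f δ := by
  obtain ⟨e, he, hX⟩ := exists_minimal_failure hord (fun a => Z a = 0) hS hE
  have hXZ : proj (X (recv e)) Z = 0 := funext fun a => hX a a.2
  exact ⟨recv e, by simp [hXZ], fun h => he (congrFun h ⟨_, hmem e⟩)⟩

theorem iSet_tall_subset [Zero 𝔽] [Fintype S] [Fintype E] [DecidableEq S] [DecidableEq E]
    (δ : R → ℕ) :
    ISet 𝔽 (fun _ : Unit => univ.image Sum.inl) (fun _ => univ.image Sum.inr) (fun _ => 0) ⊆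
      ISet 𝔽 X f δ := by
  rintro Z ⟨_, hnorm, hne⟩
  have hS : proj (univ.image Sum.inl) Z = 0 := hammingNorm_eq_zero.1 (Nat.le_zero.1 hnorm)
  refine mem_iSet_of_left_eq_zero hmem hord δ (fun s => congrFun hS ⟨.inl s, by simp⟩) ?_
  by_contra! h
  exact hne (funext fun ⟨a, ha⟩ => by obtain ⟨e, -, rfl⟩ := mem_image.1 ha; exact h e)

theorem ValidEnc.right_eq_of_enc_eq {δ : R → ℕ} {enc : (S ⊕ E → 𝔽) → C}
    (hv : ValidEnc 𝔽 X f δ enc) {x x' : S ⊕ E → 𝔽} (hc : enc x = enc x')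
    (hS : ∀ s, x (.inl s) = x' (.inl s)) (e : E) : x (.inr e) = x' (.inr e) := by
  by_contra he
  obtain ⟨e, he, hX⟩ := exists_minimal_failure hord (fun a => x a = x' a) hS ⟨e, he⟩
  exact he (congrFun (hv.proj_eq_of_enc_eq (recv e) hc (proj_eq_proj_iff.2 hX)) ⟨_, hmem e⟩)

theorem ValidEnc.tall [Nonempty 𝔽] [Fintype S] [Fintype E] [DecidableEq S] [DecidableEq E]
    {δ : R → ℕ} {enc : (S ⊕ E → 𝔽) → C} (hv : ValidEnc 𝔽 X f δ enc) :
    ValidEnc 𝔽 (fun _ : Unit => univ.image Sum.inl) (fun _ => univ.image Sum.inr)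
      (fun _ => 0) enc := by
  refine validEnc_zero_of_proj_eq fun _ x x' hc hX => proj_eq_proj_iff.2 fun a ha => ?_
  obtain ⟨e, -, rfl⟩ := mem_image.1 ha
  exact hv.right_eq_of_enc_eq hmem hord hc
    (fun s => proj_eq_proj_iff.1 hX _ (mem_image_of_mem _ (mem_univ s))) e

end

theorem tall_redundant_general
    {𝔽 : Type*} [Field 𝔽] [DecidableEq 𝔽]
    {S E R : Type*} [Fintype S] [Fintype E]
    [DecidableEq S] [DecidableEq E]
    (X f : R → Finset (S ⊕ E)) (δ : R → ℕ)
    (recv : E → R)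
    (hwant : ∀ e : E, f (recv e) = {Sum.inr e})
    (hacyc : ∃ ord : E → ℕ, ∀ e e' : E, Sum.inr e' ∈ X (recv e) → ord e' < ord e)
    {C : Type*} (enc : (S ⊕ E → 𝔽) → C) :
    ISet 𝔽 (Sum.elim X fun _ : Unit => (Finset.univ.image Sum.inl : Finset (S ⊕ E)))
        (Sum.elim f fun _ : Unit => (Finset.univ.image Sum.inr : Finset (S ⊕ E)))
        (Sum.elim δ fun _ : Unit => 0)
      = ISet 𝔽 X f δ
    ∧ (ValidEnc 𝔽 X f δ enc ↔
        ValidEnc 𝔽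
          (Sum.elim X fun _ : Unit => (Finset.univ.image Sum.inl : Finset (S ⊕ E)))
          (Sum.elim f fun _ : Unit => (Finset.univ.image Sum.inr : Finset (S ⊕ E)))
          (Sum.elim δ fun _ : Unit => 0) enc) := by
  obtain ⟨ord, hord⟩ := hacyc
  have hmem : ∀ e, Sum.inr e ∈ f (recv e) := fun e => by simp [hwant]
  refine ⟨?_, ?_⟩
  · rw [iSet_sumElim, Set.union_eq_left.2 (iSet_tall_subset hmem hord δ)]
  · rw [validEnc_sumElim_iff]
    exact ⟨fun hv => ⟨hv, hv.tall hmem hord⟩, And.left⟩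

/-- under the S⊎E partition hypotheses, adding the extra receiver
`t_all` (side information `S`, wanted set `E`, capability 0) changes neither
I(q,𝒢,δ_s) nor the validity of any encoding: `t_all` is redundant. -/
theorem tall_redundant
    {𝔽 : Type*} [Field 𝔽] [Fintype 𝔽] [DecidableEq 𝔽]
    {S E R : Type*} [Fintype S] [Fintype E] [Fintype R]
    [DecidableEq S] [DecidableEq E]
    (X f : R → Finset (S ⊕ E)) (δ : R → ℕ)
    (hdisj : ∀ r, Disjoint (f r) (X r))
    (recv : E → R) (hinj : Function.Injective recv)
    (hwant : ∀ e : E, f (recv e) = {Sum.inr e})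
    (hother : ∀ r : R, (∀ e : E, recv e ≠ r) → ∀ x ∈ f r, x.isLeft)
    (hacyc : ∃ ord : E → ℕ, ∀ e e' : E, Sum.inr e' ∈ X (recv e) → ord e' < ord e)
    {C : Type*} (enc : (S ⊕ E → 𝔽) → C) :
    ISet 𝔽 (Sum.elim X fun _ : Unit => (Finset.univ.image Sum.inl : Finset (S ⊕ E)))
        (Sum.elim f fun _ : Unit => (Finset.univ.image Sum.inr : Finset (S ⊕ E)))
        (Sum.elim δ fun _ : Unit => 0)
      = ISet 𝔽 X f δ
    ∧ (ValidEnc 𝔽 X f δ enc ↔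
        ValidEnc 𝔽
          (Sum.elim X fun _ : Unit => (Finset.univ.image Sum.inl : Finset (S ⊕ E)))
          (Sum.elim f fun _ : Unit => (Finset.univ.image Sum.inr : Finset (S ⊕ E)))
          (Sum.elim δ fun _ : Unit => 0) enc) :=
  tall_redundant_general X f δ recv hwant hacyc enc
end

section
/- Under the S⊎E partition hypotheses, if F : F_q^{S⊎E} → F_q^{|E|} is a valid (δ_s,𝒢)-ICSIE encoding of codelength exactly |E|, then for every codeword σ ∈ F_q^{|E|} and every X_S ∈ F_q^S there exists a unique X_E ∈ F_q^E such that F(X_S, X_E) = σ. -/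
open Finset

/-- under the S⊎E partition hypotheses, for a valid
(δ_s,𝒢)-ICSIE encoding of codelength exactly `|E|`, every codeword `σ` and
every `X_S` admit a unique `X_E` with `enc (X_S, X_E) = σ`. -/
theorem existsUnique_XE_of_codelength_card_E
    {𝔽 : Type*} [Field 𝔽] [Fintype 𝔽] [DecidableEq 𝔽]
    {S E R : Type*} [Fintype S] [Fintype E] [Fintype R]
    [DecidableEq S] [DecidableEq E]
    (X f : R → Finset (S ⊕ E)) (δ : R → ℕ)
    (hdisj : ∀ r, Disjoint (f r) (X r))
    (recv : E → R) (hinj : Function.Injective recv)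
    (hwant : ∀ e : E, f (recv e) = {Sum.inr e})
    (hother : ∀ r : R, (∀ e : E, recv e ≠ r) → ∀ x ∈ f r, x.isLeft)
    (hacyc : ∃ ord : E → ℕ, ∀ e e' : E, Sum.inr e' ∈ X (recv e) → ord e' < ord e)
    (enc : (S ⊕ E → 𝔽) → (E → 𝔽)) (henc : ValidEnc 𝔽 X f δ enc) :
    ∀ (σ : E → 𝔽) (xS : S → 𝔽), ∃! xE : E → 𝔽, enc (Sum.elim xS xE) = σ := by
  intro σ xS
  obtain ⟨D, hD⟩ := henc
  obtain ⟨ord, hord⟩ := hacyc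
  have hinj' : Function.Injective (fun xE : E → 𝔽 => enc (Sum.elim xS xE)) := by
    intro xE xE' h
    replace h : enc (Sum.elim xS xE) = enc (Sum.elim xS xE') := h
    have key : ∀ n e, ord e < n → xE e = xE' e := by
      intro n
      induction n with
      | zero => intro e he; omega
      | succ n ih =>
        intro e he
        set r := recv e with hr
        have hside : proj (X r) (Sum.elim xS xE) = proj (X r) (Sum.elim xS xE') := by
          funext a
          obtain ⟨v, hv⟩ := a
          cases v with
          | inl s => rfl
          | inr e' =>
            have : ord e' < ord e := hord e e' hv
            exact ih e' (by omega)
        have h1 := hD r (Sum.elim xS xE) (proj (X r) (Sum.elim xS xE))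
          (by simp [hammingDist_self])
        have h2 := hD r (Sum.elim xS xE') (proj (X r) (Sum.elim xS xE'))
          (by simp [hammingDist_self])
        rw [← hside, ← h] at h2
        have := h1.symm.trans h2
        have hm : Sum.inr e ∈ f r := by rw [hr, hwant]; simp
        have := congrFun this ⟨Sum.inr e, hm⟩
        simpa [proj] using this
    funext e
    exact key (ord e + 1) e (Nat.lt_succ_self _)
  have hbij := Finite.injective_iff_bijective.mp hinj'
  obtain ⟨xE, hxE⟩ := hbij.surjective σ
  exact ⟨xE, hxE, fun y hy => hinj' (hy.trans hxE.symm)⟩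
end

section
/- A (δ,𝔾)-NCLE exists if and only if there exists a valid ICSIE encoding of codelength |E| for the corresponding index coding instance of (𝔾,δ). -/
open Finset

/-- The input index set `In(e)` of a link `e`: the source messages assigned to
`tail e` if `tail e` is a source node, and the incoming links of `tail e`
otherwise. -/
def linkIn {V E S : Type*} [Fintype E] [Fintype S] [DecidableEq V]
    [DecidableEq S] [DecidableEq E]
    (tail head : E → V) (Sbar : Finset V) (assign : S → V) (e : E) :
    Finset (S ⊕ E) :=
  if tail e ∈ Sbar then
    (Finset.univ.filter fun s : S => assign s = tail e).image Sum.inl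
  else
    (Finset.univ.filter fun e' : E => head e' = tail e).image Sum.inr

/-- The input index set `In(t)` of a terminal `t`: its incoming links. -/
def termIn {V E S : Type*} [Fintype E] [DecidableEq V] [DecidableEq S] [DecidableEq E]
    (head : E → V) (t : V) : Finset (S ⊕ E) :=
  (Finset.univ.filter fun e' : E => head e' = t).image Sum.inr

/-- `(Fenc, Ddec)` is a (δ,𝔾)-NCLE (with input sets `In_`, `InT_`):
for every consistent assignment `x` of message and link symbols, every link
encoder outputs the correct link symbol from inputs with at most `δE e` symbol
errors, and every terminal decoder outputs its demanded source symbols from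
inputs with at most `δT t` symbol errors. -/
def IsNCLE (𝔽 : Type*) [DecidableEq 𝔽] {V E S : Type*}
    (In_ : E → Finset (S ⊕ E)) (InT_ : V → Finset (S ⊕ E))
    (Term : Finset V) (Fdem : V → Finset S) (δE : E → ℕ) (δT : V → ℕ)
    (Fenc : (e : E) → ({a // a ∈ In_ e} → 𝔽) → 𝔽)
    (Ddec : (t : {v // v ∈ Term}) → ({a // a ∈ InT_ t.1} → 𝔽) →
      ({s // s ∈ Fdem t.1} → 𝔽)) : Prop :=
  ∀ x : S ⊕ E → 𝔽, (∀ e : E, x (Sum.inr e) = Fenc e (proj (In_ e) x)) →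
    (∀ (e : E) (yt : {a // a ∈ In_ e} → 𝔽),
        hammingDist (proj (In_ e) x) yt ≤ δE e → Fenc e yt = x (Sum.inr e)) ∧
    (∀ (t : {v // v ∈ Term}) (yt : {a // a ∈ InT_ t.1} → 𝔽),
        hammingDist (proj (InT_ t.1) x) yt ≤ δT t.1 →
        Ddec t yt = fun s : {s // s ∈ Fdem t.1} => x (Sum.inl s.1))

/-! Subtracting from every vector the codeword placed on the link coordinates
turns an arbitrary vector into the unique vector that is consistent with the
link encoders and has the same source messages; Hamming distances are
translation invariant, so the network decoders become index-coding decoders.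
Conversely, the receivers of the links determine, from a codeword and exact
side information, every link symbol by induction along the acyclic order, so
for fixed source messages the encoding is injective in the link coordinates,
hence bijective over a finite field, and every consistent vector is the unique
one carried to the zero codeword. -/

lemma hammingDist_sub_right {ι 𝔽 : Type*} [Fintype ι] [DecidableEq 𝔽] [AddGroup 𝔽]
    (x y z : ι → 𝔽) : hammingDist (x - z) (y - z) = hammingDist x y :=
  hammingDist_comp (fun i a => a - z i) fun _ => sub_left_injective

lemma head_eq_tail_of_inr_mem_linkIn {V E S : Type*} [Fintype E] [Fintype S] [DecidableEq V]
    [DecidableEq S] [DecidableEq E] {tail head : E → V} {Sbar : Finset V} {assign : S → V}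
    {e e' : E} (h : Sum.inr e' ∈ linkIn tail head Sbar assign e) : head e' = tail e := by
  unfold linkIn at h
  split at h <;> simp_all

section Consistency

variable {S E 𝔽 : Type*} {In_ : E → Finset (S ⊕ E)}

variable (In_) in
def IsConsistent (F : (e : E) → ({a // a ∈ In_ e} → 𝔽) → 𝔽) (x : S ⊕ E → 𝔽) : Prop :=
  ∀ e, x (Sum.inr e) = F e (proj (In_ e) x)

def consistentExt (rank : E → ℕ) (hrank : ∀ e e', Sum.inr e' ∈ In_ e → rank e' < rank e)
    (F : (e : E) → ({a // a ∈ In_ e} → 𝔽) → 𝔽) (xs : S → 𝔽) (e : E) : 𝔽 :=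
  F e fun
    | ⟨Sum.inl s, _⟩ => xs s
    | ⟨Sum.inr e', h⟩ =>
      have := hrank e e' h
      consistentExt rank hrank F xs e'
termination_by rank e

lemma isConsistent_consistentExt (rank : E → ℕ)
    (hrank : ∀ e e', Sum.inr e' ∈ In_ e → rank e' < rank e)
    (F : (e : E) → ({a // a ∈ In_ e} → 𝔽) → 𝔽) (xs : S → 𝔽) :
    IsConsistent In_ F (Sum.elim xs (consistentExt rank hrank F xs)) := by
  intro e
  rw [Sum.elim_inr, consistentExt]
  congr 1
  funext ⟨a, _⟩
  cases a <;> rfl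

lemma IsConsistent.eq_of_comp_inl_eq (rank : E → ℕ)
    (hrank : ∀ e e', Sum.inr e' ∈ In_ e → rank e' < rank e)
    {F : (e : E) → ({a // a ∈ In_ e} → 𝔽) → 𝔽} {x x' : S ⊕ E → 𝔽}
    (hx : IsConsistent In_ F x) (hx' : IsConsistent In_ F x')
    (hS : x ∘ Sum.inl = x' ∘ Sum.inl) : x = x' := by
  have hE : ∀ e, x (Sum.inr e) = x' (Sum.inr e) := by
    intro e
    induction e using (measure rank).wf.induction with
    | h e ih =>
      rw [hx e, hx' e]
      congr 1
      funext ⟨a, ha⟩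
      cases a with
      | inl s => exact congrFun hS s
      | inr e' => exact ih e' (hrank e e' ha)
  funext a
  cases a with
  | inl s => exact congrFun hS s
  | inr e => exact hE e

end Consistency

lemma validEnc_of_decode_sub {ι R C 𝔽 : Type*} [AddGroup 𝔽] [DecidableEq 𝔽]
    {X f : R → Finset ι} {δ : R → ℕ} {enc : (ι → 𝔽) → C} (u : C → ι → 𝔽)
    (G : (r : R) → ({a // a ∈ X r} → 𝔽) → ({a // a ∈ f r} → 𝔽))
    (hG : ∀ r x xt, hammingDist (proj (X r) (x - u (enc x))) xt ≤ δ r →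
      G r xt = proj (f r) (x - u (enc x))) :
    ValidEnc 𝔽 X f δ enc := by
  refine ⟨fun r c xt => G r (xt - proj (X r) (u c)) + proj (f r) (u c), fun r x xt hxt => ?_⟩
  have hdist : hammingDist (proj (X r) (x - u (enc x))) (xt - proj (X r) (u (enc x))) ≤ δ r :=
    (hammingDist_sub_right (proj (X r) x) xt _).trans_le hxt
  simp only [hG r x _ hdist]
  funext a
  exact sub_add_cancel (x a.1) (u (enc x) a.1)

def liftInl {S E 𝔽 : Type*} [DecidableEq S] [DecidableEq E] {A : Finset S}
    (w : {s // s ∈ A} → 𝔽) : {a // a ∈ A.image (Sum.inl : S → S ⊕ E)} → 𝔽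
  | ⟨Sum.inl s, h⟩ => w ⟨s, by simpa using h⟩
  | ⟨Sum.inr _, h⟩ => absurd h (by simp)

lemma liftInl_comp_inl {S E 𝔽 : Type*} [DecidableEq S] [DecidableEq E] {A : Finset S}
    (x : S ⊕ E → 𝔽) :
    liftInl (fun s : {s // s ∈ A} => x (Sum.inl s.1)) = proj (A.image Sum.inl) x := by
  funext ⟨a, ha⟩
  cases a with
  | inl s => rfl
  | inr e => simp at ha

section Equivalence

variable {𝔽 V E S : Type*} [DecidableEq 𝔽] [DecidableEq E] [DecidableEq S]
  {In_ : E → Finset (S ⊕ E)} {InT_ : V → Finset (S ⊕ E)} {Term : Finset V}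
  {Fdem : V → Finset S} {δE : E → ℕ} {δT : V → ℕ}

theorem validEnc_of_isNCLE [AddCommGroup 𝔽] (rank : E → ℕ)
    (hrank : ∀ e e', Sum.inr e' ∈ In_ e → rank e' < rank e)
    {Fenc : (e : E) → ({a // a ∈ In_ e} → 𝔽) → 𝔽}
    {Ddec : (t : {v // v ∈ Term}) → ({a // a ∈ InT_ t.1} → 𝔽) → ({s // s ∈ Fdem t.1} → 𝔽)}
    (h : IsNCLE 𝔽 In_ InT_ Term Fdem δE δT Fenc Ddec) :
    ∃ enc : (S ⊕ E → 𝔽) → (E → 𝔽),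
      ValidEnc 𝔽 (Sum.elim In_ fun t : {v // v ∈ Term} => InT_ t.1)
        (Sum.elim (fun e : E => ({Sum.inr e} : Finset (S ⊕ E)))
          fun t : {v // v ∈ Term} => (Fdem t.1).image Sum.inl)
        (Sum.elim δE fun t : {v // v ∈ Term} => δT t.1) enc := by
  let ext := consistentExt rank hrank Fenc
  refine ⟨fun x => x ∘ Sum.inr - ext (x ∘ Sum.inl),
    validEnc_of_decode_sub (Sum.elim (0 : S → 𝔽))
      (fun
        | Sum.inl e => fun w _ => Fenc e w
        | Sum.inr t => fun w => liftInl (Ddec t w)) ?_⟩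
  intro r x xt hxt
  have hshift : x - Sum.elim (0 : S → 𝔽) (x ∘ Sum.inr - ext (x ∘ Sum.inl)) =
      Sum.elim (x ∘ Sum.inl) (ext (x ∘ Sum.inl)) := by
    funext a
    cases a <;> simp
  rw [hshift] at hxt ⊢
  obtain ⟨hE, hT⟩ := h _ (isConsistent_consistentExt rank hrank Fenc (x ∘ Sum.inl))
  cases r with
  | inl e =>
    funext ⟨a, ha⟩
    obtain rfl := Finset.mem_singleton.mp ha
    exact hE e xt hxt
  | inr t =>
    exact (congrArg liftInl (hT t xt hxt)).trans (liftInl_comp_inl _)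

theorem isNCLE_of_validEnc [Zero 𝔽] [Finite 𝔽] [Finite E] (rank : E → ℕ)
    (hrank : ∀ e e', Sum.inr e' ∈ In_ e → rank e' < rank e)
    {enc : (S ⊕ E → 𝔽) → (E → 𝔽)}
    (h : ValidEnc 𝔽 (Sum.elim In_ fun t : {v // v ∈ Term} => InT_ t.1)
        (Sum.elim (fun e : E => ({Sum.inr e} : Finset (S ⊕ E)))
          fun t : {v // v ∈ Term} => (Fdem t.1).image Sum.inl)
        (Sum.elim δE fun t : {v // v ∈ Term} => δT t.1) enc) :
    ∃ (Fenc : (e : E) → ({a // a ∈ In_ e} → 𝔽) → 𝔽)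
      (Ddec : (t : {v // v ∈ Term}) → ({a // a ∈ InT_ t.1} → 𝔽) → ({s // s ∈ Fdem t.1} → 𝔽)),
      IsNCLE 𝔽 In_ InT_ Term Fdem δE δT Fenc Ddec := by
  obtain ⟨D, hD⟩ := h
  let F c e w := D (Sum.inl e) c w ⟨Sum.inr e, mem_singleton_self _⟩
  have hcons : ∀ x, IsConsistent In_ (F (enc x)) x := fun x e =>
    (congrFun (hD (Sum.inl e) x _ ((hammingDist_self _).trans_le (Nat.zero_le _)))
      ⟨Sum.inr e, mem_singleton_self _⟩).symm
  have henc : ∀ x, IsConsistent In_ (F 0) x → enc x = 0 := by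
    intro x hx
    have hinj : Function.Injective fun xE => enc (Sum.elim (x ∘ Sum.inl) xE) := by
      intro a b (hab : enc (Sum.elim _ a) = enc (Sum.elim _ b))
      have hb := hcons (Sum.elim (x ∘ Sum.inl) b)
      rw [← hab] at hb
      exact congrArg (· ∘ Sum.inr) ((hcons _).eq_of_comp_inl_eq rank hrank hb rfl)
    obtain ⟨z, hz : enc (Sum.elim (x ∘ Sum.inl) z) = 0⟩ := Finite.surjective_of_injective hinj 0
    have hz' := hcons (Sum.elim (x ∘ Sum.inl) z)
    rw [hz] at hz'
    have hxz := hx.eq_of_comp_inl_eq rank hrank hz' rfl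
    rw [hxz]
    exact hz
  refine ⟨F 0, fun t w s => D (Sum.inr t) 0 w ⟨Sum.inl s.1, mem_image_of_mem _ s.2⟩,
    fun x hx => ⟨fun e yt hyt => ?_, fun t yt hyt => ?_⟩⟩
  · exact congrFun (henc x hx ▸ hD (Sum.inl e) x yt hyt) _
  · funext s
    exact congrFun (henc x hx ▸ hD (Sum.inr t) x yt hyt) _

end Equivalence

theorem NCLE_iff_ICSIE_general
    {𝔽 : Type*} [Field 𝔽] [Fintype 𝔽] [DecidableEq 𝔽]
    {V E S : Type*} [Fintype E] [Fintype S]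
    [DecidableEq V] [DecidableEq E] [DecidableEq S]
    (tail head : E → V) (Sbar : Finset V) (assign : S → V)
    (Term : Finset V) (Fdem : V → Finset S) (δE : E → ℕ) (δT : V → ℕ)
    (hord : ∃ ord : V → ℕ, ∀ e : E, ord (tail e) < ord (head e)) :
    (∃ (Fenc : (e : E) → ({a // a ∈ linkIn tail head Sbar assign e} → 𝔽) → 𝔽)
        (Ddec : (t : {v // v ∈ Term}) → ({a // a ∈ termIn (S := S) head t.1} → 𝔽) →
          ({s // s ∈ Fdem t.1} → 𝔽)),
        IsNCLE 𝔽 (linkIn tail head Sbar assign) (termIn head) Term Fdem δE δT Fenc Ddec)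
    ↔ (∃ enc : (S ⊕ E → 𝔽) → (E → 𝔽),
        ValidEnc 𝔽
          (Sum.elim (linkIn tail head Sbar assign)
            (fun t : {v // v ∈ Term} => termIn head t.1))
          (Sum.elim (fun e : E => ({Sum.inr e} : Finset (S ⊕ E)))
            (fun t : {v // v ∈ Term} => (Fdem t.1).image Sum.inl))
          (Sum.elim δE (fun t : {v // v ∈ Term} => δT t.1)) enc) := by
  obtain ⟨ord, hord⟩ := hord
  have hrank : ∀ e e', Sum.inr e' ∈ linkIn tail head Sbar assign e →
      ord (head e') < ord (head e) := fun e e' h =>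
    head_eq_tail_of_inr_mem_linkIn h ▸ hord e
  exact ⟨fun ⟨_, _, h⟩ => validEnc_of_isNCLE _ hrank h,
    fun ⟨_, h⟩ => isNCLE_of_validEnc _ hrank h⟩

/-- a (δ,𝔾)-NCLE exists iff a valid ICSIE encoding of codelength
`|E|` exists for the corresponding index coding instance of (𝔾,δ). -/
theorem NCLE_iff_ICSIE
    {𝔽 : Type*} [Field 𝔽] [Fintype 𝔽] [DecidableEq 𝔽]
    {V E S : Type*} [Fintype V] [Fintype E] [Fintype S]
    [DecidableEq V] [DecidableEq E] [DecidableEq S]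
    (tail head : E → V) (Sbar : Finset V) (assign : S → V)
    (Term : Finset V) (Fdem : V → Finset S) (δE : E → ℕ) (δT : V → ℕ)
    (hord : ∃ ord : V → ℕ, ∀ e : E, ord (tail e) < ord (head e))
    (hsrc : ∀ e : E, head e ∉ Sbar)
    (hassign : ∀ s : S, assign s ∈ Sbar)
    (hterm : ∀ e : E, tail e ∉ Term) :
    (∃ (Fenc : (e : E) → ({a // a ∈ linkIn tail head Sbar assign e} → 𝔽) → 𝔽)
        (Ddec : (t : {v // v ∈ Term}) → ({a // a ∈ termIn (S := S) head t.1} → 𝔽) →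
          ({s // s ∈ Fdem t.1} → 𝔽)),
        IsNCLE 𝔽 (linkIn tail head Sbar assign) (termIn head) Term Fdem δE δT Fenc Ddec)
    ↔ (∃ enc : (S ⊕ E → 𝔽) → (E → 𝔽),
        ValidEnc 𝔽
          (Sum.elim (linkIn tail head Sbar assign)
            (fun t : {v // v ∈ Term} => termIn head t.1))
          (Sum.elim (fun e : E => ({Sum.inr e} : Finset (S ⊕ E)))
            (fun t : {v // v ∈ Term} => (Fdem t.1).image Sum.inl))
          (Sum.elim δE (fun t : {v // v ∈ Term} => δT t.1)) enc) :=
  NCLE_iff_ICSIE_general tail head Sbar assign Term Fdem δE δT hord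
end

section
/- Let (δ_s,𝒢) be an ICSIE instance and let (0,𝒢̄) be the instance obtained by replacing each side information set 𝒳_i by a subset 𝒳̄_i ⊆ 𝒳_i with |𝒳_i \ 𝒳̄_i| ≤ 2δ_s^(i) and setting all error resistance capabilities to 0 (messages and wanted sets unchanged). Then I(q,𝒢̄,0) ⊆ I(q,𝒢,δ_s), and consequently every valid (δ_s,𝒢)-ICSIE encoding is a valid (0,𝒢̄)-ICSIE encoding. -/
open Finset

/-!
A vector vanishing on `𝒳̄_i` has at most `|𝒳_i \ 𝒳̄_i| ≤ 2δ_s^(i)` nonzero coordinates in `𝒳_i`,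
which gives the inclusion of the `I`-sets. A valid `(δ_s,𝒢)` encoding separates `X` and `X'`
whenever `X - X' ∈ I(q,𝒢,δ_s)`: side informations at Hamming distance `≤ 2δ` have a common
corruption at distance `≤ δ` from both (copy `X'` on half of the differing coordinates), on which
the decoder would have to return both wanted parts. Conversely, with capability `0` separation on
`I(q,𝒢̄,0)` suffices, by decoding to any preimage consistent with the side information.
-/

theorem proj_sub {ι 𝔽 : Type*} [Sub 𝔽] (A : Finset ι) (x y : ι → 𝔽) :
    proj A (x - y) = proj A x - proj A y := rfl

theorem hammingNorm_sub_eq_hammingDist {ι : Type*} [Fintype ι] {β : ι → Type*}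
    [∀ i, AddGroup (β i)] [∀ i, DecidableEq (β i)] (x y : ∀ i, β i) :
    hammingNorm (x - y) = hammingDist x y := by
  simp only [hammingNorm, hammingDist, Pi.sub_apply, ne_eq, sub_eq_zero]

theorem hammingNorm_proj_le_card_sdiff {ι 𝔽 : Type*} [DecidableEq ι] [Zero 𝔽] [DecidableEq 𝔽]
    {A B : Finset ι} {Z : ι → 𝔽} (hZ : ∀ a ∈ B, Z a = 0) :
    hammingNorm (proj A Z) ≤ (A \ B).card :=
  card_le_card_of_injOn Subtype.val
    (fun a ha => mem_sdiff.2 ⟨a.2, fun hB => (mem_filter.1 ha).2 (hZ a hB)⟩)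
    Subtype.val_injective.injOn

theorem exists_hammingDist_le_of_hammingDist_le_two_mul {ι : Type*} [Fintype ι]
    {β : ι → Type*} [∀ i, DecidableEq (β i)] {u v : ∀ i, β i} {d : ℕ}
    (h : hammingDist u v ≤ 2 * d) :
    ∃ w, hammingDist u w ≤ d ∧ hammingDist v w ≤ d := by
  classical
  set S := univ.filter fun i => u i ≠ v i
  obtain ⟨T, hTS, hTcard⟩ := exists_subset_card_eq (min_le_left S.card d)
  refine ⟨fun i => if i ∈ T then v i else u i, ?_, ?_⟩
  · calc hammingDist u _ ≤ T.card := card_le_card fun i hi => by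
          by_contra hT
          simp [hT] at hi
      _ ≤ d := by omega
  · calc hammingDist v _ ≤ (S \ T).card := card_le_card fun i hi => by
          by_cases hT : i ∈ T
          · simp [hT] at hi
          · simp_all [S, eq_comm]
      _ ≤ d := by
          have : hammingDist u v = S.card := rfl
          rw [card_sdiff_of_subset hTS]
          omega

theorem ISet_zero_subset_of_card_sdiff_le {𝔽 ι R : Type*} [Zero 𝔽] [DecidableEq 𝔽]
    [DecidableEq ι] {X Xbar f : R → Finset ι} {δ : R → ℕ}
    (hcard : ∀ r, (X r \ Xbar r).card ≤ 2 * δ r) :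
    ISet 𝔽 Xbar f (fun _ => 0) ⊆ ISet 𝔽 X f δ := by
  rintro Z ⟨r, hnorm, hf⟩
  have hZ : proj (Xbar r) Z = 0 := hammingNorm_eq_zero.1 (Nat.le_zero.1 hnorm)
  exact ⟨r, (hammingNorm_proj_le_card_sdiff fun a ha => congrFun hZ ⟨a, ha⟩).trans (hcard r), hf⟩

section ValidEnc

variable {𝔽 ι R C : Type*} [DecidableEq 𝔽] {X f : R → Finset ι} {enc : (ι → 𝔽) → C}

theorem ValidEnc.ne_of_sub_mem_ISet [AddGroup 𝔽] {δ : R → ℕ} (hv : ValidEnc 𝔽 X f δ enc)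
    {x x' : ι → 𝔽} (hx : x - x' ∈ ISet 𝔽 X f δ) : enc x ≠ enc x' := by
  obtain ⟨D, hD⟩ := hv
  obtain ⟨r, hnorm, hf⟩ := hx
  rw [proj_sub, hammingNorm_sub_eq_hammingDist] at hnorm
  obtain ⟨w, hw, hw'⟩ := exists_hammingDist_le_of_hammingDist_le_two_mul hnorm
  intro heq
  apply hf
  rw [proj_sub, ← hD r x w hw, ← hD r x' w hw', heq, sub_self]

theorem validEnc_zero_of_ne_of_sub_mem_ISet [AddGroup 𝔽]
    (hsep : ∀ x x', x - x' ∈ ISet 𝔽 X f (fun _ => 0) → enc x ≠ enc x') :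
    ValidEnc 𝔽 X f (fun _ => 0) enc := by
  classical
  refine ⟨fun r c xt => if h : ∃ x, enc x = c ∧ proj (X r) x = xt then proj (f r) h.choose
    else 0, fun r x xt hdist => ?_⟩
  have hxt : proj (X r) x = xt := hammingDist_eq_zero.1 (Nat.le_zero.1 hdist)
  have h : ∃ x', enc x' = enc x ∧ proj (X r) x' = xt := ⟨x, rfl, hxt⟩
  obtain ⟨henc, hproj⟩ := h.choose_spec
  simp only [dif_pos h]
  by_contra hne
  refine hsep _ x ⟨r, ?_, ?_⟩ henc
  · rw [proj_sub, hproj, hxt, sub_self, hammingNorm_zero]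
    exact Nat.zero_le _
  · rwa [proj_sub, sub_ne_zero]

end ValidEnc

theorem ISet_subset_and_valid_of_shrink_general
    {𝔽 : Type*} [Field 𝔽] [DecidableEq 𝔽]
    {n m : ℕ} (X Xbar f : Fin m → Finset (Fin n)) (δ : Fin m → ℕ)
    (hcard : ∀ i, (X i \ Xbar i).card ≤ 2 * δ i) :
    ISet 𝔽 Xbar f (fun _ => 0) ⊆ ISet 𝔽 X f δ
    ∧ ∀ (N : ℕ) (enc : (Fin n → 𝔽) → (Fin N → 𝔽)),
        ValidEnc 𝔽 X f δ enc → ValidEnc 𝔽 Xbar f (fun _ => 0) enc := by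
  have hsubset : ISet 𝔽 Xbar f (fun _ => 0) ⊆ ISet 𝔽 X f δ :=
    ISet_zero_subset_of_card_sdiff_le hcard
  exact ⟨hsubset, fun _ _ hv =>
    validEnc_zero_of_ne_of_sub_mem_ISet fun _ _ hx => hv.ne_of_sub_mem_ISet (hsubset hx)⟩

/-- shrinking each side information set `𝒳_i` to `𝒳̄_i ⊆ 𝒳_i`
with `|𝒳_i \ 𝒳̄_i| ≤ 2δ_s^(i)` and setting all capabilities to 0 yields
`I(q,𝒢̄,0) ⊆ I(q,𝒢,δ_s)`; consequently every valid (δ_s,𝒢)-ICSIE encoding is a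
valid (0,𝒢̄)-ICSIE encoding. -/
theorem ISet_subset_and_valid_of_shrink
    {𝔽 : Type*} [Field 𝔽] [Fintype 𝔽] [DecidableEq 𝔽]
    {n m : ℕ} (X Xbar f : Fin m → Finset (Fin n)) (δ : Fin m → ℕ)
    (hdisj : ∀ i, Disjoint (f i) (X i))
    (hsub : ∀ i, Xbar i ⊆ X i)
    (hcard : ∀ i, (X i \ Xbar i).card ≤ 2 * δ i) :
    ISet 𝔽 Xbar f (fun _ => 0) ⊆ ISet 𝔽 X f δ
    ∧ ∀ (N : ℕ) (enc : (Fin n → 𝔽) → (Fin N → 𝔽)),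
        ValidEnc 𝔽 X f δ enc → ValidEnc 𝔽 Xbar f (fun _ => 0) enc :=
  ISet_subset_and_valid_of_shrink_general X Xbar f δ hcard
end
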